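/- arXiv:1907.12544 — 3 statements merged into one kernel-verified Lean document; each statement's English description precedes it below -/
import Mathlib

section
/- Let G be a discrete group, I a nonempty set, T = I × G × I, and S = B(I,G). Define Ψ : ℓ¹(T) → ℓ¹(S) by Ψ(b)(t) := b(t) for t ∈ T and Ψ(b)(o) := −Σ_{s∈T} b(s), and Φ : ℓ¹(S) → ℂ by Φ(a) := Σ_{s∈S} a(s). Then Ψ and Φ are continuous algebra homomorphisms and the sequence 0 → ℓ¹(T) → ℓ¹(S) → ℂ → 0 (with arrows Ψ and Φ) is a short exact sequence: Ψ is injective, Φ is surjective, and the range of Ψ equals the kernel of Φ. -/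
open Filter Topology
open scoped ENNReal TensorProduct Classical

noncomputable section

/-- The Banach space `ℓ¹(X)` of absolutely summable complex functions on `X`. -/
abbrev l1 (X : Type*) : Type _ := lp (fun _ : X => ℂ) 1

section Defs

variable {I G : Type*} [Group G]

/-- The multiplication of the Brandt semigroup `S = B(I,G) = (I × G × I) ∪ {o}`,
where the zero element `o` is encoded as `none`. -/
def brandtMul : Option (I × G × I) → Option (I × G × I) → Option (I × G × I)
  | some (i, g, j), some (i', g', j') => if j = i' then some (i, g * g', j') else none
  | _, _ => none

/-- Spec: `mul` is the convolution product on `ℓ¹(T)`, `T = I × G × I`: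
`(ab)(i,g,j) = Σ_{k ∈ I, h ∈ G} a(i, g h⁻¹, k) b(k, h, j)`. -/
def IsConvT (mul : l1 (I × G × I) → l1 (I × G × I) → l1 (I × G × I)) : Prop :=
  ∀ (a b : l1 (I × G × I)) (i : I) (g : G) (j : I),
    mul a b (i, g, j) = ∑' p : I × G, a (i, g * p.2⁻¹, p.1) * b (p.1, p.2, j)

/-- Spec: `mul` is the convolution product on the group algebra `ℓ¹(G)`. -/
def IsConvG (mul : l1 G → l1 G → l1 G) : Prop :=
  ∀ (a b : l1 G) (g : G), mul a b g = ∑' h : G, a (g * h⁻¹) * b h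

/-- Spec: `act` is the left module action of `ℓ¹(T)` on `ℓ¹(T × T) = ℓ¹(T) ⊗̂ ℓ¹(T)`,
determined by `a·(x ⊗ y) = (ax) ⊗ y`. -/
def IsLeftActT
    (act : l1 (I × G × I) → l1 ((I × G × I) × (I × G × I)) → l1 ((I × G × I) × (I × G × I))) :
    Prop :=
  ∀ (a : l1 (I × G × I)) (w : l1 ((I × G × I) × (I × G × I))) (i : I) (g : G) (j : I)
    (t' : I × G × I),
    act a w ((i, g, j), t') = ∑' p : I × G, a (i, g * p.2⁻¹, p.1) * w ((p.1, p.2, j), t')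

/-- Spec: `act` is the right module action of `ℓ¹(T)` on `ℓ¹(T × T) = ℓ¹(T) ⊗̂ ℓ¹(T)`,
determined by `(x ⊗ y)·a = x ⊗ (ya)`. -/
def IsRightActT
    (act : l1 ((I × G × I) × (I × G × I)) → l1 (I × G × I) → l1 ((I × G × I) × (I × G × I))) :
    Prop :=
  ∀ (w : l1 ((I × G × I) × (I × G × I))) (a : l1 (I × G × I)) (t : I × G × I) (i : I) (g : G)
    (j : I),
    act w a (t, (i, g, j)) = ∑' p : I × G, w (t, (i, g * p.2⁻¹, p.1)) * a (p.1, p.2, j)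

/-- Spec: `d` is the diagonal map `π : ℓ¹(T × T) = ℓ¹(T) ⊗̂ ℓ¹(T) → ℓ¹(T)`,
determined by `δ_x ⊗ δ_y ↦ δ_x δ_y`. -/
def IsDiagT (d : l1 ((I × G × I) × (I × G × I)) → l1 (I × G × I)) : Prop :=
  ∀ (w : l1 ((I × G × I) × (I × G × I))) (i : I) (g : G) (j : I),
    d w (i, g, j) = ∑' p : I × G, w ((i, g * p.2⁻¹, p.1), (p.1, p.2, j))

/-- Spec: `act` is the left module action of `ℓ¹(G)` on `ℓ¹(G × G) = ℓ¹(G) ⊗̂ ℓ¹(G)`. -/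
def IsLeftActG (act : l1 G → l1 (G × G) → l1 (G × G)) : Prop :=
  ∀ (a : l1 G) (w : l1 (G × G)) (g g' : G),
    act a w (g, g') = ∑' h : G, a (g * h⁻¹) * w (h, g')

/-- Spec: `act` is the right module action of `ℓ¹(G)` on `ℓ¹(G × G) = ℓ¹(G) ⊗̂ ℓ¹(G)`. -/
def IsRightActG (act : l1 (G × G) → l1 G → l1 (G × G)) : Prop :=
  ∀ (w : l1 (G × G)) (a : l1 G) (g g' : G),
    act w a (g, g') = ∑' h : G, w (g, g' * h⁻¹) * a h

/-- Spec: `d` is the diagonal map `π : ℓ¹(G × G) = ℓ¹(G) ⊗̂ ℓ¹(G) → ℓ¹(G)`. -/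
def IsDiagG (d : l1 (G × G) → l1 G) : Prop :=
  ∀ (w : l1 (G × G)) (g : G), d w g = ∑' h : G, w (g * h⁻¹, h)

/-- Spec: `mul` is the convolution product on the semigroup algebra `ℓ¹(S)`, `S = B(I,G)`:
`(ab)(s) = Σ_{u v = s} a(u) b(v)`. -/
def IsConvS (mul : l1 (Option (I × G × I)) → l1 (Option (I × G × I)) →
    l1 (Option (I × G × I))) : Prop :=
  ∀ (a b : l1 (Option (I × G × I))) (s : Option (I × G × I)),
    mul a b s =
      ∑' p : {p : Option (I × G × I) × Option (I × G × I) // brandtMul p.1 p.2 = s},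
        a p.val.1 * b p.val.2

/-- Spec: left module action of `ℓ¹(S)` on `ℓ¹(S × S) = ℓ¹(S) ⊗̂ ℓ¹(S)`. -/
def IsLeftActS (act : l1 (Option (I × G × I)) →
    l1 (Option (I × G × I) × Option (I × G × I)) →
    l1 (Option (I × G × I) × Option (I × G × I))) : Prop :=
  ∀ (a : l1 (Option (I × G × I))) (w : l1 (Option (I × G × I) × Option (I × G × I)))
    (s s' : Option (I × G × I)),
    act a w (s, s') =
      ∑' p : {p : Option (I × G × I) × Option (I × G × I) // brandtMul p.1 p.2 = s},
        a p.val.1 * w (p.val.2, s')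

/-- Spec: right module action of `ℓ¹(S)` on `ℓ¹(S × S) = ℓ¹(S) ⊗̂ ℓ¹(S)`. -/
def IsRightActS (act : l1 (Option (I × G × I) × Option (I × G × I)) →
    l1 (Option (I × G × I)) →
    l1 (Option (I × G × I) × Option (I × G × I))) : Prop :=
  ∀ (w : l1 (Option (I × G × I) × Option (I × G × I))) (a : l1 (Option (I × G × I)))
    (s s' : Option (I × G × I)),
    act w a (s, s') =
      ∑' p : {p : Option (I × G × I) × Option (I × G × I) // brandtMul p.1 p.2 = s'},
        w (s, p.val.1) * a p.val.2

/-- Spec: the diagonal map `π : ℓ¹(S × S) = ℓ¹(S) ⊗̂ ℓ¹(S) → ℓ¹(S)`. -/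
def IsDiagS (d : l1 (Option (I × G × I) × Option (I × G × I)) → l1 (Option (I × G × I))) :
    Prop :=
  ∀ (w : l1 (Option (I × G × I) × Option (I × G × I))) (s : Option (I × G × I)),
    d w s =
      ∑' p : {p : Option (I × G × I) × Option (I × G × I) // brandtMul p.1 p.2 = s},
        w p.val

/-- Spec: `E` sends `b ∈ ℓ¹(G × G)` and `i,j,i',j' ∈ I` to the element
`E^b_{(i,j,i',j')} ∈ ℓ¹(T × T)`. -/
def IsE (E : l1 (G × G) → I → I → I → I → l1 ((I × G × I) × (I × G × I))) : Prop :=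
  ∀ (b : l1 (G × G)) (i j i' j' : I),
    (∀ g g' : G, E b i j i' j' ((i, g, j), (i', g', j')) = b (g, g')) ∧
    (∀ (u v u' v' : I) (g g' : G), (u, v, u', v') ≠ (i, j, i', j') →
      E b i j i' j' ((u, g, v), (u', g', v')) = 0)

/-- Spec: `H` sends `c ∈ ℓ¹(G)` and `i,j ∈ I` to the element `H^c_{(i,j)} ∈ ℓ¹(T)`. -/
def IsH (H : l1 G → I → I → l1 (I × G × I)) : Prop :=
  ∀ (c : l1 G) (i j : I),
    (∀ g : G, H c i j (i, g, j) = c g) ∧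
    (∀ (u v : I) (g : G), (u, v) ≠ (i, j) → H c i j (u, g, v) = 0)

/-- Spec: `comp` sends `a ∈ ℓ¹(T)` and `u,v ∈ I` to `a_{(u,v)} ∈ ℓ¹(G)`,
`a_{(u,v)}(g) = a(u,g,v)`. -/
def IsComp (comp : l1 (I × G × I) → I → I → l1 G) : Prop :=
  ∀ (a : l1 (I × G × I)) (u v : I) (g : G), comp a u v g = a (u, g, v)

/-- The net `W_{F,λ} = (1/#F) Σ_{i,j ∈ F} E^{m_λ}_{(i,j,j,i)}` in `ℓ¹(T × T)`. -/
def Wnet (E : l1 (G × G) → I → I → I → I → l1 ((I × G × I) × (I × G × I)))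
    {Λ : Type*} (m : Λ → l1 (G × G)) (F : Finset I) (l : Λ) :
    l1 ((I × G × I) × (I × G × I)) :=
  (F.card : ℂ)⁻¹ • ∑ i ∈ F, ∑ j ∈ F, E (m l) i j j i

/-- `(m_λ)` is a bounded approximate diagonal for `ℓ¹(G)` (with respect to the given
realizations of the product, the module actions on `ℓ¹(G) ⊗̂ ℓ¹(G) = ℓ¹(G × G)` and
the diagonal map). -/
def IsBddApproxDiagG {Λ : Type*} [Preorder Λ]
    (mulG : l1 G → l1 G → l1 G) (actLG : l1 G → l1 (G × G) → l1 (G × G))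
    (actRG : l1 (G × G) → l1 G → l1 (G × G)) (piG : l1 (G × G) → l1 G)
    (m : Λ → l1 (G × G)) : Prop :=
  (∃ M : ℝ, ∀ l, ‖m l‖ ≤ M) ∧
  ∀ c : l1 G,
    Tendsto (fun l => actLG c (m l) - actRG (m l) c) atTop (𝓝 0) ∧
    Tendsto (fun l => mulG (piG (m l)) c) atTop (𝓝 c)

end Defs

/-- Pseudo-amenability of an `ℓ¹`-type Banach algebra `A = ℓ¹(X)`, whose projective tensor
square `A ⊗̂ A` is realized concretely as `M = ℓ¹(X × X)`: there is a net (equivalently, a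
nontrivial filtered family) `w` in `M` such that `a·w_n − w_n·a → 0` and `π(w_n)a → a` for
every `a ∈ A`. -/
def HasApproxDiag {A M : Type*} [NormedAddCommGroup A] [NormedAddCommGroup M]
    (mul : A → A → A) (actL : A → M → M) (actR : M → A → M) (diag : M → A) : Prop :=
  ∃ (ι : Type*) (F : Filter ι), F.NeBot ∧ ∃ w : ι → M,
    ∀ a : A,
      Tendsto (fun n => actL a (w n) - actR (w n) a) F (𝓝 0) ∧
      Tendsto (fun n => mul (diag (w n)) a) F (𝓝 a)

/-- A discrete group `G` is amenable: there is a left-invariant mean on `ℓ∞(G)`,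
i.e. a positive normalized left translation invariant linear functional. -/
def AmenableGroup (G : Type*) [Group G] : Prop :=
  ∃ m : lp (fun _ : G => ℝ) ∞ →ₗ[ℝ] ℝ,
    (∀ f : lp (fun _ : G => ℝ) ∞, (∀ x, 0 ≤ f x) → 0 ≤ m f) ∧
    (∀ f : lp (fun _ : G => ℝ) ∞, (∀ x, f x = 1) → m f = 1) ∧
    (∀ (g : G) (f f' : lp (fun _ : G => ℝ) ∞), (∀ x, f' x = f (g * x)) → m f' = m f)

/-- The projective tensor seminorm on the algebraic tensor product `A ⊗[ℂ] A`:
the infimum of `Σ ‖x_k‖ ‖y_k‖` over all finite representations `Σ x_k ⊗ y_k`. -/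
def projSeminorm (A : Type*) [NormedAddCommGroup A] [NormedSpace ℂ A] (x : A ⊗[ℂ] A) : ℝ :=
  sInf {r : ℝ | ∃ (n : ℕ) (f : Fin n → A × A),
    x = ∑ k, (f k).1 ⊗ₜ[ℂ] (f k).2 ∧ r = ∑ k, ‖(f k).1‖ * ‖(f k).2‖}

/-- A Banach algebra `A` is pseudo-amenable: there is a net (equivalently, a nontrivial
filtered family) `(w_n)` in `A ⊗̂ A` with `a·w_n − w_n·a → 0` and `π(w_n)a → a` for every
`a ∈ A`, where `π` is the diagonal map and `A ⊗̂ A` carries the projective tensor seminorm. -/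
def PseudoAmenable (A : Type*) [NonUnitalNormedRing A] [NormedSpace ℂ A]
    [SMulCommClass ℂ A A] [IsScalarTower ℂ A A] : Prop :=
  ∃ (ι : Type*) (F : Filter ι), F.NeBot ∧ ∃ w : ι → A ⊗[ℂ] A,
    ∀ a : A,
      Tendsto (fun n => projSeminorm A
        (TensorProduct.map (LinearMap.mulLeft ℂ a) LinearMap.id (w n) -
          TensorProduct.map LinearMap.id (LinearMap.mulRight ℂ a) (w n))) F (𝓝 0) ∧
      Tendsto (fun n => LinearMap.mul' ℂ A (w n) * a) F (𝓝 a)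

/-! The sum functional `Φ` is multiplicative on `ℓ¹(S)` for any magma `S`: summing a convolution
fibrewise over the product map gives the product of the sums. `Ψ` is a bijection of `ℓ¹(T)` onto
the zero-sum elements of `ℓ¹(T ∪ {o})`, with inverse the restriction to `T`. Hence `Ψ(xy)` and
`Ψ(x)Ψ(y)` are both zero-sum elements, and they agree on `T` because the fibre of the Brandt product
over `(i, g, j)` is a copy of `I × G` on which the convolution of `ℓ¹(S)` is that of `ℓ¹(T)`. -/

theorem HasSum.option {α β : Type*} [AddCommMonoid α] [TopologicalSpace α] [ContinuousAdd α]
    {f : Option β → α} {a : α} (h : HasSum (fun b => f (some b)) a) : HasSum f (f none + a) := by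
  have h' : HasSum (fun o : Option β => o.elim 0 fun b => f (some b)) a :=
    ((Option.some_injective β).hasSum_iff
      (by rintro (_ | b) hb; exacts [rfl, (hb ⟨b, rfl⟩).elim])).mp h
  convert (hasSum_ite_eq none (f none)).add h' using 1
  funext o
  cases o <;> simp

theorem tsum_option {α β : Type*} [NormedAddCommGroup α] [CompleteSpace α] {f : Option β → α}
    (hf : Summable f) : ∑' o, f o = f none + ∑' b, f (some b) :=
  (hf.comp_injective (Option.some_injective β)).hasSum.option.tsum_eq

namespace l1

variable {X : Type*}

theorem summable (a : l1 X) : Summable ⇑a := a.2.summable_of_one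

theorem summable_norm (a : l1 X) : Summable fun x => ‖a x‖ := by
  simpa using a.2.summable (by norm_num)

theorem norm_eq_tsum_norm (a : l1 X) : ‖a‖ = ∑' x, ‖a x‖ := by
  simp [lp.norm_eq_tsum_rpow (by norm_num : 0 < (1 : ℝ≥0∞).toReal) a]

theorem memℓp_one_of_summable_norm {f : X → ℂ} (hf : Summable fun x => ‖f x‖) : Memℓp f 1 :=
  memℓp_gen (by simpa using hf)

theorem tsum_single (x : X) (c : ℂ) : ∑' y, lp.single 1 x c y = c := by
  simp [lp.single_apply]

theorem tsumCLM_surjective [Nonempty X] : Function.Surjective (lp.tsumCLM ℂ X ℂ) :=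
  fun c => ⟨lp.single 1 (Classical.arbitrary X) c, tsum_single _ c⟩

def restrictSome (a : l1 (Option X)) : l1 X :=
  ⟨fun x => a (some x),
    memℓp_one_of_summable_norm ((summable_norm a).comp_injective (Option.some_injective X))⟩

@[simp] theorem restrictSome_apply (a : l1 (Option X)) (x : X) : restrictSome a x = a (some x) :=
  rfl

/-- The map `Ψ`: `b ↦ b - (∑ b) δ_o`, with `o` encoded as `none`. -/
def toOptionZeroSum : l1 X →L[ℂ] l1 (Option X) :=
  LinearMap.mkContinuous
    { toFun b := ⟨fun o => o.elim (-∑' x, b x) b, memℓp_one_of_summable_norm <|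
        ((summable_norm b).hasSum.option (f := fun o => ‖o.elim (-∑' x, b x) b‖)).summable⟩
      map_add' b b' := by
        ext (_ | x)
        · show -∑' x, (b + b') x = -∑' x, b x + -∑' x, b' x
          simp only [lp.coeFn_add, Pi.add_apply, b.summable.tsum_add b'.summable, neg_add]
        · rfl
      map_smul' c b := by
        ext (_ | x)
        · show -∑' x, (c • b) x = c * -∑' x, b x
          simp only [lp.coeFn_smul, Pi.smul_apply, smul_eq_mul, tsum_mul_left, mul_neg]
        · rfl }
    2 fun b => by
      rw [norm_eq_tsum_norm, tsum_option (summable_norm _)]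
      show ‖-∑' x, b x‖ + ∑' x, ‖b x‖ ≤ 2 * ‖b‖
      rw [norm_neg, ← norm_eq_tsum_norm]
      linarith [lp.norm_tsum_le b]

@[simp] theorem toOptionZeroSum_some (b : l1 X) (x : X) : toOptionZeroSum b (some x) = b x := rfl

@[simp] theorem toOptionZeroSum_none (b : l1 X) : toOptionZeroSum b none = -∑' x, b x := rfl

theorem tsum_toOptionZeroSum (b : l1 X) : ∑' o, toOptionZeroSum b o = 0 := by
  simp [tsum_option (summable _)]

theorem restrictSome_toOptionZeroSum (b : l1 X) : restrictSome (toOptionZeroSum b) = b := rfl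

theorem toOptionZeroSum_injective : Function.Injective (toOptionZeroSum (X := X)) :=
  Function.LeftInverse.injective restrictSome_toOptionZeroSum

theorem toOptionZeroSum_restrictSome {a : l1 (Option X)} (ha : ∑' o, a o = 0) :
    toOptionZeroSum (restrictSome a) = a := by
  rw [tsum_option (summable a)] at ha
  ext (_ | x)
  · simp only [toOptionZeroSum_none, restrictSome_apply]
    linear_combination -ha
  · rfl

theorem range_toOptionZeroSum :
    Set.range (toOptionZeroSum (X := X)) = {a | ∑' o, a o = 0} := by
  ext a
  refine ⟨?_, fun ha => ⟨restrictSome a, toOptionZeroSum_restrictSome ha⟩⟩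
  rintro ⟨b, rfl⟩
  exact tsum_toOptionZeroSum b

theorem hasSum_fiberwise_mul {μ : X → X → X} (a b : l1 X) :
    HasSum (fun x => ∑' p : {p : X × X // μ p.1 p.2 = x}, a p.1.1 * b p.1.2)
      ((∑' x, a x) * ∑' x, b x) :=
  (a.summable.hasSum.mul b.summable.hasSum
    (summable_mul_of_summable_norm (summable_norm a) (summable_norm b))).tsum_fiberwise _

end l1

section Brandt

variable {I G : Type*} [Group G]

theorem brandtMul_eq_some_iff {u v : Option (I × G × I)} {i j : I} {g : G} :
    brandtMul u v = some (i, g, j) ↔ ∃ k h, u = some (i, g * h⁻¹, k) ∧ v = some (k, h, j) := by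
  constructor
  · intro huv
    rcases u with _ | ⟨i', g', k⟩ <;> rcases v with _ | ⟨k', h, j'⟩ <;> try cases huv
    dsimp only [brandtMul] at huv
    split_ifs at huv with hk
    obtain ⟨rfl, rfl, rfl⟩ : i' = i ∧ g' * h = g ∧ j' = j := by simpa using huv
    exact ⟨k, h, by simp, by rw [hk]⟩
  · rintro ⟨k, h, rfl, rfl⟩
    simp [brandtMul]

def brandtFiberEquiv (i : I) (g : G) (j : I) :
    I × G ≃ {p : Option (I × G × I) × Option (I × G × I) // brandtMul p.1 p.2 = some (i, g, j)} :=
  Equiv.ofBijective (fun q => ⟨(some (i, g * q.2⁻¹, q.1), some (q.1, q.2, j)),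
      brandtMul_eq_some_iff.mpr ⟨_, _, rfl, rfl⟩⟩)
    ⟨fun q q' hq => by
        simp only [Subtype.mk.injEq, Prod.mk.injEq, Option.some.injEq, mul_right_inj, inv_inj,
          true_and, and_true] at hq
        exact Prod.ext hq.2.1 hq.2.2,
      fun ⟨_, hp⟩ => by
        obtain ⟨k, h, hu, hv⟩ := brandtMul_eq_some_iff.mp hp
        exact ⟨(k, h), by ext <;> simp [hu, hv]⟩⟩

variable {mulS : l1 (Option (I × G × I)) → l1 (Option (I × G × I)) → l1 (Option (I × G × I))}

theorem IsConvS.tsum_mul (hS : IsConvS mulS) (a b : l1 (Option (I × G × I))) :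
    ∑' s, mulS a b s = (∑' s, a s) * ∑' s, b s := by
  rw [tsum_congr (hS a b)]
  exact (l1.hasSum_fiberwise_mul a b).tsum_eq

theorem IsConvS.apply_some (hS : IsConvS mulS) (a b : l1 (Option (I × G × I))) (i : I) (g : G)
    (j : I) :
    mulS a b (some (i, g, j)) =
      ∑' q : I × G, a (some (i, g * q.2⁻¹, q.1)) * b (some (q.1, q.2, j)) := by
  rw [hS, ← (brandtFiberEquiv i g j).tsum_eq]
  rfl

theorem IsConvS.toOptionZeroSum_mul (hS : IsConvS mulS)
    {mulT : l1 (I × G × I) → l1 (I × G × I) → l1 (I × G × I)} (hT : IsConvT mulT)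
    (x y : l1 (I × G × I)) :
    l1.toOptionZeroSum (mulT x y) = mulS (l1.toOptionZeroSum x) (l1.toOptionZeroSum y) := by
  have hzero : ∑' s, mulS (l1.toOptionZeroSum x) (l1.toOptionZeroSum y) s = 0 := by
    simp [hS.tsum_mul, l1.tsum_toOptionZeroSum]
  rw [← l1.toOptionZeroSum_restrictSome hzero]
  congr 1
  ext ⟨i, g, j⟩
  simp only [l1.restrictSome_apply, hS.apply_some, l1.toOptionZeroSum_some, hT x y]

end Brandt

theorem brandt_l1_short_exact_general {G : Type*} [Group G] {I : Type*}
    (mulS : l1 (Option (I × G × I)) → l1 (Option (I × G × I)) → l1 (Option (I × G × I)))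
    (hmulS : IsConvS mulS)
    (mulT : l1 (I × G × I) → l1 (I × G × I) → l1 (I × G × I))
    (hmulT : IsConvT mulT)
    (Ψ : l1 (I × G × I) → l1 (Option (I × G × I)))
    (hΨ : ∀ (b : l1 (I × G × I)) (t : I × G × I), Ψ b (some t) = b t)
    (hΨo : ∀ b : l1 (I × G × I), Ψ b none = -∑' t : I × G × I, b t)
    (Φ : l1 (Option (I × G × I)) → ℂ)
    (hΦ : ∀ a : l1 (Option (I × G × I)), Φ a = ∑' s : Option (I × G × I), a s) :
    Continuous Ψ ∧ (∀ x y, Ψ (x + y) = Ψ x + Ψ y) ∧ (∀ (c : ℂ) x, Ψ (c • x) = c • Ψ x) ∧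
    (∀ x y, Ψ (mulT x y) = mulS (Ψ x) (Ψ y)) ∧
    Continuous Φ ∧ (∀ x y, Φ (x + y) = Φ x + Φ y) ∧ (∀ (c : ℂ) x, Φ (c • x) = c • Φ x) ∧
    (∀ x y, Φ (mulS x y) = Φ x * Φ y) ∧
    Function.Injective Ψ ∧ Function.Surjective Φ ∧
    Set.range Ψ = {a | Φ a = 0} := by
  obtain rfl : Ψ = l1.toOptionZeroSum := by
    ext b (_ | t)
    exacts [hΨo b, hΨ b t]
  obtain rfl : Φ = lp.tsumCLM ℂ (Option (I × G × I)) ℂ := funext hΦ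
  exact ⟨map_continuous _, map_add _, map_smul _, hmulS.toOptionZeroSum_mul hmulT,
    map_continuous _, map_add _, map_smul _, hmulS.tsum_mul, l1.toOptionZeroSum_injective,
    l1.tsumCLM_surjective, l1.range_toOptionZeroSum⟩

theorem brandt_l1_short_exact {G : Type*} [Group G] {I : Type*} [Nonempty I]
    (mulS : l1 (Option (I × G × I)) → l1 (Option (I × G × I)) → l1 (Option (I × G × I)))
    (hmulS : IsConvS mulS)
    (mulT : l1 (I × G × I) → l1 (I × G × I) → l1 (I × G × I))
    (hmulT : IsConvT mulT)
    (Ψ : l1 (I × G × I) → l1 (Option (I × G × I)))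
    (hΨ : ∀ (b : l1 (I × G × I)) (t : I × G × I), Ψ b (some t) = b t)
    (hΨo : ∀ b : l1 (I × G × I), Ψ b none = -∑' t : I × G × I, b t)
    (Φ : l1 (Option (I × G × I)) → ℂ)
    (hΦ : ∀ a : l1 (Option (I × G × I)), Φ a = ∑' s : Option (I × G × I), a s) :
    Continuous Ψ ∧ (∀ x y, Ψ (x + y) = Ψ x + Ψ y) ∧ (∀ (c : ℂ) x, Ψ (c • x) = c • Ψ x) ∧
    (∀ x y, Ψ (mulT x y) = mulS (Ψ x) (Ψ y)) ∧
    Continuous Φ ∧ (∀ x y, Φ (x + y) = Φ x + Φ y) ∧ (∀ (c : ℂ) x, Φ (c • x) = c • Φ x) ∧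
    (∀ x y, Φ (mulS x y) = Φ x * Φ y) ∧
    Function.Injective Ψ ∧ Function.Surjective Φ ∧
    Set.range Ψ = {a | Φ a = 0} :=
  brandt_l1_short_exact_general mulS hmulS mulT hmulT Ψ hΨ hΨo Φ hΦ
end
end

section
/- Let G be a discrete group, I a nonempty set, T = I × G × I, and let (m_λ)_{λ∈Λ} be a bounded approximate diagonal for ℓ¹(G). For each finite nonempty subset F ⊆ I and λ ∈ Λ, set W_{F,λ} := (1/#F) Σ_{i,j∈F} E^{m_λ}_{(i,j,j,i)} ∈ ℓ¹(T × T). Then for every a ∈ ℓ¹(T), the inequality ‖a·W_{F,λ} − W_{F,λ}·a‖ ≤ Σ_{u,v∈F} ‖a_{(u,v)}·m_λ − m_λ·a_{(u,v)}‖ + Σ_{v∈F, u∈I∖F} ‖a_{(u,v)}·m_λ‖ + Σ_{u∈F, v∈I∖F} ‖m_λ·a_{(u,v)}‖ holds, where a_{(u,v)} ∈ ℓ¹(G) is defined by a_{(u,v)}(g) := a(u,g,v). -/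
open Filter Topology
open scoped ENNReal TensorProduct Classical

noncomputable section

/-!
`W_{F,λ}` lives on the blocks `(i,j) ⊗ (j,i)` with `i, j ∈ F`, so both products with `a` can be
computed block by block. The commutator `a·W − W·a` vanishes off the coordinates
`((u,g,v),(v,g',v'))` with `v ∈ F`, and there it is `(#F)⁻¹` times the `(g,g')`-coefficient of
`[v' ∈ F] a_{(u,v')}·m_λ − [u ∈ F] m_λ·a_{(u,v')}`. This block does not depend on `v`, so the `#F`
choices of `v` cancel the factor `(#F)⁻¹`, and the norm of the commutator is the sum of the norms
of these blocks over `(u,v') ∈ I × I`, which splits into the three sums of the bound.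
-/

lemma l1.norm_eq_tsum {X : Type*} (f : l1 X) : ‖f‖ = ∑' x, ‖f x‖ := by
  simp [lp.norm_eq_tsum_rpow (by norm_num : 0 < (1 : ℝ≥0∞).toReal) f]

lemma l1.enorm_eq_tsum {X : Type*} (f : l1 X) : ‖f‖ₑ = ∑' x, ‖f x‖ₑ := by
  have hsum : Summable fun x => ‖f x‖ := by
    simpa using (lp.memℓp f).summable (p := 1) (by norm_num)
  rw [← ofReal_norm, l1.norm_eq_tsum, ENNReal.ofReal_tsum_of_nonneg (fun _ => norm_nonneg _) hsum]
  simp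

lemma summable_norm_and_norm_eq_tsum_of_enorm_eq {ι E F : Type*} [SeminormedAddGroup E]
    [SeminormedAddGroup F] {x : E} {f : ι → F} (h : ‖x‖ₑ = ∑' i, ‖f i‖ₑ) :
    Summable (fun i => ‖f i‖) ∧ ‖x‖ = ∑' i, ‖f i‖ := by
  have hfin : ∑' i, ‖f i‖ₑ ≠ ⊤ := h ▸ enorm_ne_top
  refine ⟨by simpa using ENNReal.summable_toReal hfin, ?_⟩
  rw [← toReal_enorm, h, ENNReal.tsum_toReal_eq fun _ => enorm_ne_top]
  simp

lemma tsum_ite_fst_eq {I G α : Type*} [AddCommMonoid α] [TopologicalSpace α] (k : I)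
    (f : G → α) :
    ∑' p : I × G, (if p.1 = k then f p.2 else 0) = ∑' g, f g := by
  refine (Function.Injective.tsum_eq (Prod.mk_right_injective k) ?_).symm.trans (by simp)
  intro p hp
  by_cases h : p.1 = k
  · exact ⟨p.2, by simp [← h]⟩
  · simp [h] at hp

lemma tsum_prod_eq_of_eq_zero_off_cross {I α : Type*} [NormedAddCommGroup α] [CompleteSpace α]
    (F : Finset I) {φ : I × I → α}
    (hφ : Summable φ) (hzero : ∀ u v, u ∉ F → v ∉ F → φ (u, v) = 0) :
    ∑' p, φ p = (∑ u ∈ F, ∑ v ∈ F, φ (u, v)) +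
      (∑ v ∈ F, ∑' u : {u : I // u ∉ F}, φ (u.val, v)) +
      (∑ u ∈ F, ∑' v : {v : I // v ∉ F}, φ (u, v.val)) := by
  have hrow_mem (u : I) (hu : u ∈ F) : ∑' v, φ (u, v) =
      ∑ v ∈ F, φ (u, v) + ∑' v : {v : I // v ∉ F}, φ (u, v.val) :=
    ((hφ.prod_factor u).sum_add_tsum_subtype_compl F).symm
  have hrow_notMem (u : I) (hu : u ∉ F) : ∑' v, φ (u, v) = ∑ v ∈ F, φ (u, v) :=
    tsum_eq_sum fun v hv => hzero u v hu hv
  have hcol (v : I) : Summable fun u : {u : I // u ∉ F} => φ (u.val, v) :=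
    (hφ.comp_injective (Prod.mk_left_injective v)).subtype _
  rw [hφ.tsum_prod, ← hφ.prod.sum_add_tsum_subtype_compl F, Finset.sum_congr rfl hrow_mem,
    tsum_congr fun u : {u : I // u ∉ F} => hrow_notMem u.val u.2,
    Summable.tsum_finsetSum fun v _ => hcol v, Finset.sum_add_distrib]
  abel

section Blocks

variable {I G : Type*}

def blockIndex (q : I × (I × I) × (G × G)) : (I × G × I) × (I × G × I) :=
  ((q.2.1.1, q.2.2.1, q.1), (q.1, q.2.2.2, q.2.1.2))

lemma blockIndex_injective : Function.Injective (blockIndex (I := I) (G := G)) := by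
  rintro ⟨v, ⟨u, w⟩, g, h⟩ ⟨v', ⟨u', w'⟩, g', h'⟩ e
  simp_all [blockIndex]

lemma enorm_eq_card_mul_tsum_of_apply_eq_ite (F : Finset I) (c : ℂ) (Y : I → I → l1 (G × G))
    {D : l1 ((I × G × I) × (I × G × I))}
    (hD : ∀ u g v u' g' v', D ((u, g, v), (u', g', v')) =
      if u' = v ∧ v ∈ F then c * Y u v' (g, g') else 0) :
    ‖D‖ₑ = F.card * ‖c‖ₑ * ∑' p : I × I, ‖Y p.1 p.2‖ₑ := by
  have hsupp : Function.support (fun z => ‖D z‖ₑ) ⊆ Set.range blockIndex := by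
    rintro ⟨⟨u, g, v⟩, u', g', v'⟩ hz
    by_cases h : u' = v
    · exact ⟨(v, (u, v'), (g, g')), by simp [blockIndex, h]⟩
    · simp [hD, h] at hz
  have hblock (q : I × (I × I) × (G × G)) : ‖D (blockIndex q)‖ₑ =
      if q.1 ∈ F then ‖c‖ₑ * ‖Y q.2.1.1 q.2.1.2 q.2.2‖ₑ else 0 := by
    split_ifs with h <;> simp [blockIndex, hD, h]
  rw [l1.enorm_eq_tsum, ← blockIndex_injective.tsum_eq hsupp, tsum_congr hblock,
    ENNReal.tsum_prod', tsum_eq_sum (s := F) fun v hv => by simp [hv]]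
  have hrow (v : I) (hv : v ∈ F) : ∑' r : (I × I) × (G × G),
      (if v ∈ F then ‖c‖ₑ * ‖Y r.1.1 r.1.2 r.2‖ₑ else 0) = ‖c‖ₑ * ∑' p : I × I, ‖Y p.1 p.2‖ₑ := by
    simp only [hv, if_true, ENNReal.tsum_mul_left, ENNReal.tsum_prod' (α := I × I),
      l1.enorm_eq_tsum]
  rw [Finset.sum_congr rfl hrow, Finset.sum_const, nsmul_eq_mul, mul_assoc]

end Blocks

section Wnet

variable {I G Λ : Type*}
  {E : l1 (G × G) → I → I → I → I → l1 ((I × G × I) × (I × G × I))}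

lemma IsE.apply_eq (hE : IsE E) (b : l1 (G × G)) (i j i' j' u : I) (g : G) (v u' : I) (g' : G)
    (v' : I) : E b i j i' j' ((u, g, v), (u', g', v')) =
      if (u, v, u', v') = (i, j, i', j') then b (g, g') else 0 := by
  split_ifs with h
  · simp only [Prod.mk.injEq] at h
    obtain ⟨rfl, rfl, rfl, rfl⟩ := h
    exact (hE b u v u' v').1 g g'
  · exact (hE b i j i' j').2 u v u' v' g g' h

lemma Wnet_apply (hE : IsE E) (m : Λ → l1 (G × G)) (F : Finset I) (l : Λ) (u : I) (g : G)
    (v u' : I) (g' : G) (v' : I) : Wnet E m F l ((u, g, v), (u', g', v')) =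
      if u ∈ F ∧ v ∈ F ∧ u' = v ∧ v' = u then (F.card : ℂ)⁻¹ * m l (g, g') else 0 := by
  simp only [Wnet, lp.coeFn_smul, lp.coeFn_sum, Pi.smul_apply, Finset.sum_apply, hE.apply_eq,
    Prod.mk.injEq, smul_eq_mul, ite_and, Finset.sum_ite_eq, Finset.sum_ite_irrel,
    Finset.sum_const_zero, mul_ite, mul_zero]

variable [Group G] {comp : l1 (I × G × I) → I → I → l1 G}

lemma IsLeftActT.apply_Wnet
    {actLT : l1 (I × G × I) → l1 ((I × G × I) × (I × G × I)) → l1 ((I × G × I) × (I × G × I))}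
    (hactLT : IsLeftActT actLT) {actLG : l1 G → l1 (G × G) → l1 (G × G)}
    (hactLG : IsLeftActG actLG) (hcomp : IsComp comp) (hE : IsE E) (m : Λ → l1 (G × G))
    (F : Finset I) (l : Λ) (a : l1 (I × G × I)) (u : I) (g : G) (v u' : I) (g' : G) (v' : I) :
    actLT a (Wnet E m F l) ((u, g, v), (u', g', v')) =
      if u' = v ∧ v ∈ F ∧ v' ∈ F then (F.card : ℂ)⁻¹ * actLG (comp a u v') (m l) (g, g')
      else 0 := by
  rw [hactLT]
  simp only [Wnet_apply hE]
  split_ifs with h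
  · obtain ⟨rfl, hv, hv'⟩ := h
    have hterm (p : I × G) : a (u, g * p.2⁻¹, p.1) * (if p.1 ∈ F ∧ u' ∈ F ∧ u' = u' ∧ v' = p.1
        then (F.card : ℂ)⁻¹ * m l (p.2, g') else 0) =
        if p.1 = v' then (F.card : ℂ)⁻¹ * (a (u, g * p.2⁻¹, v') * m l (p.2, g')) else 0 := by
      by_cases hp : p.1 = v' <;> simp [hp, hv, hv', eq_comm (a := v')]
      ring
    rw [tsum_congr hterm,
      tsum_ite_fst_eq v' fun h => (F.card : ℂ)⁻¹ * (a (u, g * h⁻¹, v') * m l (h, g')),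
      tsum_mul_left, hactLG]
    simp only [hcomp _ _ _ _]
  · refine (tsum_congr fun p => ?_).trans tsum_zero
    rw [if_neg, mul_zero]
    rintro ⟨hp, hv, rfl, rfl⟩
    exact h ⟨rfl, hv, hp⟩

lemma IsRightActT.apply_Wnet
    {actRT : l1 ((I × G × I) × (I × G × I)) → l1 (I × G × I) → l1 ((I × G × I) × (I × G × I))}
    (hactRT : IsRightActT actRT) {actRG : l1 (G × G) → l1 G → l1 (G × G)}
    (hactRG : IsRightActG actRG) (hcomp : IsComp comp) (hE : IsE E) (m : Λ → l1 (G × G))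
    (F : Finset I) (l : Λ) (a : l1 (I × G × I)) (u : I) (g : G) (v u' : I) (g' : G) (v' : I) :
    actRT (Wnet E m F l) a ((u, g, v), (u', g', v')) =
      if u' = v ∧ v ∈ F ∧ u ∈ F then (F.card : ℂ)⁻¹ * actRG (m l) (comp a u v') (g, g')
      else 0 := by
  rw [hactRT]
  simp only [Wnet_apply hE]
  split_ifs with h
  · obtain ⟨rfl, hv, hu⟩ := h
    have hterm (p : I × G) : (if u ∈ F ∧ u' ∈ F ∧ u' = u' ∧ p.1 = u
        then (F.card : ℂ)⁻¹ * m l (g, g' * p.2⁻¹) else 0) * a (p.1, p.2, v') =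
        if p.1 = u then (F.card : ℂ)⁻¹ * (m l (g, g' * p.2⁻¹) * a (u, p.2, v')) else 0 := by
      by_cases hp : p.1 = u <;> simp [hp, hu, hv]
      ring
    rw [tsum_congr hterm,
      tsum_ite_fst_eq u fun h => (F.card : ℂ)⁻¹ * (m l (g, g' * h⁻¹) * a (u, h, v')),
      tsum_mul_left, hactRG]
    simp only [hcomp _ _ _ _]
  · refine (tsum_congr fun p => ?_).trans tsum_zero
    rw [if_neg, zero_mul]
    rintro ⟨hu, hv, rfl, -⟩
    exact h ⟨rfl, hv, hu⟩

lemma commutator_Wnet_apply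
    {actLT : l1 (I × G × I) → l1 ((I × G × I) × (I × G × I)) → l1 ((I × G × I) × (I × G × I))}
    (hactLT : IsLeftActT actLT) {actLG : l1 G → l1 (G × G) → l1 (G × G)}
    (hactLG : IsLeftActG actLG)
    {actRT : l1 ((I × G × I) × (I × G × I)) → l1 (I × G × I) → l1 ((I × G × I) × (I × G × I))}
    (hactRT : IsRightActT actRT) {actRG : l1 (G × G) → l1 G → l1 (G × G)}
    (hactRG : IsRightActG actRG) (hcomp : IsComp comp) (hE : IsE E) (m : Λ → l1 (G × G))
    (F : Finset I) (l : Λ) (a : l1 (I × G × I)) (u : I) (g : G) (v u' : I) (g' : G) (v' : I) :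
    (actLT a (Wnet E m F l) - actRT (Wnet E m F l) a) ((u, g, v), (u', g', v')) =
      if u' = v ∧ v ∈ F then (F.card : ℂ)⁻¹ *
        ((if v' ∈ F then actLG (comp a u v') (m l) else 0) -
          (if u ∈ F then actRG (m l) (comp a u v') else 0)) (g, g')
      else 0 := by
  rw [lp.coeFn_sub, Pi.sub_apply, hactLT.apply_Wnet hactLG hcomp hE,
    hactRT.apply_Wnet hactRG hcomp hE]
  by_cases h : u' = v ∧ v ∈ F
  · by_cases hu : u ∈ F <;> by_cases hv' : v' ∈ F <;> simp [h, hu, hv', mul_sub]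
  · rw [if_neg h, if_neg fun h' => h ⟨h'.1, h'.2.1⟩, if_neg fun h' => h ⟨h'.1, h'.2.1⟩, sub_zero]

end Wnet

theorem W_commutator_norm_bound_general {G : Type*} [Group G] {I : Type*}
    {Λ : Type*}
    (actLG : l1 G → l1 (G × G) → l1 (G × G)) (hactLG : IsLeftActG actLG)
    (actRG : l1 (G × G) → l1 G → l1 (G × G)) (hactRG : IsRightActG actRG)
    (m : Λ → l1 (G × G))
    (E : l1 (G × G) → I → I → I → I → l1 ((I × G × I) × (I × G × I))) (hE : IsE E)
    (comp : l1 (I × G × I) → I → I → l1 G) (hcomp : IsComp comp)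
    (actLT : l1 (I × G × I) → l1 ((I × G × I) × (I × G × I)) → l1 ((I × G × I) × (I × G × I)))
    (hactLT : IsLeftActT actLT)
    (actRT : l1 ((I × G × I) × (I × G × I)) → l1 (I × G × I) → l1 ((I × G × I) × (I × G × I)))
    (hactRT : IsRightActT actRT)
    (F : Finset I) (l : Λ) (a : l1 (I × G × I)) :
    ‖actLT a (Wnet E m F l) - actRT (Wnet E m F l) a‖ ≤
      (∑ u ∈ F, ∑ v ∈ F, ‖actLG (comp a u v) (m l) - actRG (m l) (comp a u v)‖) +
      (∑ v ∈ F, ∑' u : {u : I // u ∉ F}, ‖actLG (comp a u.val v) (m l)‖) +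
      (∑ u ∈ F, ∑' v : {v : I // v ∉ F}, ‖actRG (m l) (comp a u v.val)‖) := by
  have hD := commutator_Wnet_apply hactLT hactLG hactRT hactRG hcomp hE m F l a
  rcases F.eq_empty_or_nonempty with rfl | hF
  · have hzero : actLT a (Wnet E m ∅ l) - actRT (Wnet E m ∅ l) a = 0 := by
      ext ⟨⟨u, g, v⟩, u', g', v'⟩
      simp [hD]
    simp [hzero]
  have hcard : (F.card : ℝ≥0∞) * ‖(F.card : ℂ)⁻¹‖ₑ = 1 := by
    rw [← ofReal_norm, norm_inv, Complex.norm_natCast, ENNReal.ofReal_inv_of_pos (by positivity),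
      ENNReal.ofReal_natCast, ENNReal.mul_inv_cancel (by positivity) (ENNReal.natCast_ne_top _)]
  obtain ⟨hsum, hnorm⟩ := summable_norm_and_norm_eq_tsum_of_enorm_eq <| by
    rw [enorm_eq_card_mul_tsum_of_apply_eq_ite F _ _ hD, hcard, one_mul]
  rw [hnorm, tsum_prod_eq_of_eq_zero_off_cross F hsum fun u v hu hv => by simp [hu, hv]]
  refine le_of_eq (congr_arg₂ _ (congr_arg₂ _ ?_ ?_) ?_)
  · exact Finset.sum_congr rfl fun u hu => Finset.sum_congr rfl fun v hv => by simp [hu, hv]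
  · exact Finset.sum_congr rfl fun v hv => tsum_congr fun u => by simp [u.2, hv]
  · exact Finset.sum_congr rfl fun u hu => tsum_congr fun v => by simp [v.2, hu]

theorem W_commutator_norm_bound {G : Type*} [Group G] {I : Type*} [Nonempty I]
    {Λ : Type*} [Preorder Λ] [IsDirected Λ (· ≤ ·)] [Nonempty Λ]
    (mulG : l1 G → l1 G → l1 G) (hmulG : IsConvG mulG)
    (actLG : l1 G → l1 (G × G) → l1 (G × G)) (hactLG : IsLeftActG actLG)
    (actRG : l1 (G × G) → l1 G → l1 (G × G)) (hactRG : IsRightActG actRG)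
    (piG : l1 (G × G) → l1 G) (hpiG : IsDiagG piG)
    (m : Λ → l1 (G × G)) (hm : IsBddApproxDiagG mulG actLG actRG piG m)
    (E : l1 (G × G) → I → I → I → I → l1 ((I × G × I) × (I × G × I))) (hE : IsE E)
    (comp : l1 (I × G × I) → I → I → l1 G) (hcomp : IsComp comp)
    (actLT : l1 (I × G × I) → l1 ((I × G × I) × (I × G × I)) → l1 ((I × G × I) × (I × G × I)))
    (hactLT : IsLeftActT actLT)
    (actRT : l1 ((I × G × I) × (I × G × I)) → l1 (I × G × I) → l1 ((I × G × I) × (I × G × I)))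
    (hactRT : IsRightActT actRT)
    (F : Finset I) (hF : F.Nonempty) (l : Λ) (a : l1 (I × G × I)) :
    ‖actLT a (Wnet E m F l) - actRT (Wnet E m F l) a‖ ≤
      (∑ u ∈ F, ∑ v ∈ F, ‖actLG (comp a u v) (m l) - actRG (m l) (comp a u v)‖) +
      (∑ v ∈ F, ∑' u : {u : I // u ∉ F}, ‖actLG (comp a u.val v) (m l)‖) +
      (∑ u ∈ F, ∑' v : {v : I // v ∉ F}, ‖actRG (m l) (comp a u v.val)‖) :=
  W_commutator_norm_bound_general actLG hactLG actRG hactRG m E hE comp hcomp actLT hactLT actRT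
    hactRT F l a
end
end

section
/- Let G be a discrete group, I a nonempty set, T = I × G × I, and let (m_λ)_{λ∈Λ} be a bounded approximate diagonal for ℓ¹(G). For each finite nonempty subset F ⊆ I and λ ∈ Λ, set W_{F,λ} := (1/#F) Σ_{i,j∈F} E^{m_λ}_{(i,j,j,i)} ∈ ℓ¹(T × T). Then the diagonal map π : ℓ¹(T × T) → ℓ¹(T) satisfies π(W_{F,λ}) = Σ_{i∈F} H^{π_G(m_λ)}_{(i,i)}, where π_G : ℓ¹(G × G) → ℓ¹(G) is the diagonal map of ℓ¹(G). -/
open Filter Topology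
open scoped ENNReal TensorProduct Classical

noncomputable section

theorem diag_W {G : Type*} [Group G] {I : Type*} [Nonempty I]
    {Λ : Type*} [Preorder Λ] [IsDirected Λ (· ≤ ·)] [Nonempty Λ]
    (mulG : l1 G → l1 G → l1 G) (hmulG : IsConvG mulG)
    (actLG : l1 G → l1 (G × G) → l1 (G × G)) (hactLG : IsLeftActG actLG)
    (actRG : l1 (G × G) → l1 G → l1 (G × G)) (hactRG : IsRightActG actRG)
    (piG : l1 (G × G) → l1 G) (hpiG : IsDiagG piG)
    (m : Λ → l1 (G × G)) (hm : IsBddApproxDiagG mulG actLG actRG piG m)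
    (E : l1 (G × G) → I → I → I → I → l1 ((I × G × I) × (I × G × I))) (hE : IsE E)
    (H : l1 G → I → I → l1 (I × G × I)) (hH : IsH H)
    (piT : l1 ((I × G × I) × (I × G × I)) → l1 (I × G × I)) (hpiT : IsDiagT piT)
    (F : Finset I) (hF : F.Nonempty) (l : Λ) :
    piT (Wnet E m F l) = ∑ i ∈ F, H (piG (m l)) i i := by
  classical
  refine lp.ext (funext fun t => ?_)
  obtain ⟨u, g, v⟩ := t
  rw [hpiT]
  -- summability of the diagonal slice of `m l`
  have hfsum : Summable (fun h : G => (m l : G × G → ℂ) (g * h⁻¹, h)) := by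
    have h1 : Summable (fun q : G × G => ‖(m l : G × G → ℂ) q‖) := by
      have h0 := lp.memℓp (m l)
      rw [memℓp_gen_iff (by norm_num)] at h0
      simpa using h0
    exact h1.of_norm.comp_injective fun a b hab => by
      simpa using congrArg Prod.snd hab
  -- pointwise value of `Wnet`
  have hW : ∀ (k : I) (h : G),
      (Wnet E m F l : ((I × G × I) × (I × G × I)) → ℂ) ((u, g * h⁻¹, k), (k, h, v)) =
        (F.card : ℂ)⁻¹ *
          (if u = v ∧ u ∈ F ∧ k ∈ F then (m l : G × G → ℂ) (g * h⁻¹, h) else 0) := by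
    intro k h
    have hE' : ∀ i j : I,
        (E (m l) i j j i : ((I × G × I) × (I × G × I)) → ℂ) ((u, g * h⁻¹, k), (k, h, v)) =
          if i = u ∧ v = u ∧ j = k then (m l : G × G → ℂ) (g * h⁻¹, h) else 0 := by
      intro i j
      by_cases hc' : i = u ∧ v = u ∧ j = k
      · obtain ⟨h1, h2, h3⟩ := hc'
        subst h1; subst h2; subst h3
        rw [if_pos ⟨rfl, rfl, rfl⟩]
        exact (hE (m l) _ _ _ _).1 (g * h⁻¹) h
      · rw [if_neg hc']
        refine (hE (m l) i j j i).2 u k k v (g * h⁻¹) h ?_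
        intro hcon
        simp only [Prod.mk.injEq] at hcon
        obtain ⟨e1, e2, -, e4⟩ := hcon
        exact hc' ⟨e1.symm, e4.trans e1.symm, e2.symm⟩
    have hsum : (∑ i ∈ F, ∑ j ∈ F,
        if i = u ∧ v = u ∧ j = k then (m l : G × G → ℂ) (g * h⁻¹, h) else 0)
          = if u = v ∧ u ∈ F ∧ k ∈ F then (m l : G × G → ℂ) (g * h⁻¹, h) else 0 := by
      by_cases hcase : u = v ∧ u ∈ F ∧ k ∈ F
      · obtain ⟨h1, h2, h3⟩ := hcase
        rw [if_pos ⟨h1, h2, h3⟩, Finset.sum_eq_single u]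
        · rw [Finset.sum_eq_single k]
          · rw [if_pos ⟨rfl, h1.symm, rfl⟩]
          · intro j _ hj; exact if_neg (by tauto)
          · intro hk; exact absurd h3 hk
        · intro i _ hi; exact Finset.sum_eq_zero fun j _ => if_neg (by tauto)
        · intro hu; exact absurd h2 hu
      · rw [if_neg hcase]
        refine Finset.sum_eq_zero fun i hi => Finset.sum_eq_zero fun j hj => if_neg ?_
        rintro ⟨e1, e2, e3⟩
        exact hcase ⟨e2.symm, e1 ▸ hi, e3 ▸ hj⟩
    calc (Wnet E m F l : ((I × G × I) × (I × G × I)) → ℂ) ((u, g * h⁻¹, k), (k, h, v))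
        = (F.card : ℂ)⁻¹ * ∑ i ∈ F, ∑ j ∈ F,
            (E (m l) i j j i : ((I × G × I) × (I × G × I)) → ℂ)
              ((u, g * h⁻¹, k), (k, h, v)) := by
          simp only [Wnet, lp.coeFn_smul, Pi.smul_apply, lp.coeFn_sum, Finset.sum_apply,
            smul_eq_mul]
      _ = (F.card : ℂ)⁻¹ *
          (if u = v ∧ u ∈ F ∧ k ∈ F then (m l : G × G → ℂ) (g * h⁻¹, h) else 0) := by
          rw [Finset.sum_congr rfl fun i _ => Finset.sum_congr rfl fun j _ => hE' i j, hsum]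
  rw [tsum_congr fun p : I × G => hW p.1 p.2, lp.coeFn_sum, Finset.sum_apply]
  by_cases hcase : u = v ∧ u ∈ F
  · obtain ⟨huv, huF⟩ := hcase
    subst huv
    -- simplify the condition in the tsum
    have hred : ∀ p : I × G,
        (F.card : ℂ)⁻¹ *
          (if u = u ∧ u ∈ F ∧ p.1 ∈ F then (m l : G × G → ℂ) (g * p.2⁻¹, p.2) else 0) =
        if p.1 ∈ F then (F.card : ℂ)⁻¹ * (m l : G × G → ℂ) (g * p.2⁻¹, p.2) else 0 := by
      intro p
      simp [huF, mul_ite]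
    rw [tsum_congr hred]
    -- decompose the tsum over `I × G` as a finite sum over `F` of tsums over `G`
    have hinj : ∀ k : I, Function.Injective (fun h : G => ((k, h) : I × G)) :=
      fun k a b hab => by simpa using congrArg Prod.snd hab
    have hgk : ∀ k : I, Summable (fun p : I × G =>
        if p.1 = k then (F.card : ℂ)⁻¹ * (m l : G × G → ℂ) (g * p.2⁻¹, p.2) else 0) := by
      intro k
      refine ((hinj k).summable_iff ?_).mp ?_
      · rintro ⟨k', h⟩ hk'
        refine if_neg fun e => hk' ⟨h, by rw [show k' = k from e]⟩
      · exact (hfsum.mul_left ((F.card : ℂ)⁻¹)).congr fun h => by simp [Function.comp]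
    have hdecomp : ∀ p : I × G,
        (if p.1 ∈ F then (F.card : ℂ)⁻¹ * (m l : G × G → ℂ) (g * p.2⁻¹, p.2) else 0) =
        ∑ k ∈ F,
          (if p.1 = k then (F.card : ℂ)⁻¹ * (m l : G × G → ℂ) (g * p.2⁻¹, p.2) else 0) := by
      intro p
      rw [Finset.sum_ite_eq F p.1 fun _ =>
        (F.card : ℂ)⁻¹ * (m l : G × G → ℂ) (g * p.2⁻¹, p.2)]
    rw [tsum_congr hdecomp, Summable.tsum_finsetSum fun k _ => hgk k]
    have htk : ∀ k ∈ F, (∑' p : I × G,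
        if p.1 = k then (F.card : ℂ)⁻¹ * (m l : G × G → ℂ) (g * p.2⁻¹, p.2) else 0) =
        (F.card : ℂ)⁻¹ * ∑' h : G, (m l : G × G → ℂ) (g * h⁻¹, h) := by
      intro k _
      rw [← (hinj k).tsum_eq]
      · simp only [if_pos rfl]
        exact tsum_mul_left
      · rintro ⟨k', h⟩ hk'
        rw [Function.mem_support] at hk'
        have e : k' = k := by by_contra hne; exact hk' (if_neg hne)
        exact ⟨h, by rw [e]⟩
    rw [Finset.sum_congr rfl htk, Finset.sum_const, nsmul_eq_mul]
    have hcard : (F.card : ℂ) ≠ 0 := Nat.cast_ne_zero.mpr hF.card_pos.ne'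
    rw [← mul_assoc, mul_inv_cancel₀ hcard, one_mul]
    -- right-hand side
    have hHval : ∀ i ∈ F, (H (piG (m l)) i i : (I × G × I) → ℂ) (u, g, u) =
        if i = u then (piG (m l) : G → ℂ) g else 0 := by
      intro i _
      by_cases hiu : i = u
      · subst hiu
        rw [if_pos rfl]
        exact (hH (piG (m l)) i i).1 g
      · rw [if_neg hiu]
        refine (hH (piG (m l)) i i).2 u u g fun e => hiu ?_
        have := congrArg Prod.fst e
        simpa using this.symm
    rw [Finset.sum_congr rfl hHval, Finset.sum_ite_eq' F u, if_pos huF, hpiG]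
  · have hzero : ∀ p : I × G,
        (F.card : ℂ)⁻¹ *
          (if u = v ∧ u ∈ F ∧ p.1 ∈ F then (m l : G × G → ℂ) (g * p.2⁻¹, p.2) else 0) = 0 := by
      intro p
      rw [if_neg fun hc => hcase ⟨hc.1, hc.2.1⟩, mul_zero]
    rw [tsum_congr hzero, tsum_zero]
    refine (Finset.sum_eq_zero fun i hi => ?_).symm
    refine (hH (piG (m l)) i i).2 u v g fun e => ?_
    simp only [Prod.mk.injEq] at e
    exact hcase ⟨e.1.trans e.2.symm, e.1 ▸ hi⟩


end
end
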